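/- arXiv:2210.17241 — 2 statements merged into one kernel-verified Lean document; each statement's English description precedes it below -/
import Mathlib

section
/- Let f : ℝ^n → ℝ be differentiable with m-strongly monotone gradient and M-Lipschitz gradient, where 0 < m ≤ M. Then for all x, y: ⟨∇f(x) - ∇f(y), x - y⟩ ≥ (mM/(m+M))·‖x-y‖² + (1/(m+M))·‖∇f(x) - ∇f(y)‖². -/
open RealInnerProductSpace

/-! Subtracting `m / 2 * ‖x‖ ^ 2` from `f` leaves a convex function whose gradient
`G = g - m • id` satisfies `⟪G x - G y, x - y⟫ ≤ (M - m) * ‖x - y‖ ^ 2`. For such a function the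
Baillon–Haddad inequality `‖G x - G y‖ ^ 2 ≤ (M - m) * ⟪G x - G y, x - y⟫` holds: compare the
function at `y` and at `y - t • (G y - G x)` using convexity from below and the quadratic upper
bound from above, add the two resulting inequalities with `x` and `y` swapped, and optimise in `t`.
Expanding `G = g - m • id` in this inequality gives the claim. -/

theorem le_mul_of_forall_two_mul_sub_mul_sq_le {a b L : ℝ} (hL : 0 ≤ L)
    (h : ∀ t : ℝ, (2 * t - L * t ^ 2) * b ≤ a) : b ≤ L * a := by
  rcases hL.eq_or_lt with rfl | hL
  · by_contra! hb
    rw [zero_mul] at hb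
    have := h ((a + 1) / b)
    rw [zero_mul, sub_zero, mul_assoc, div_mul_cancel₀ _ hb.ne'] at this
    linarith [h 0]
  · have := h L⁻¹
    field_simp at this
    linarith

section InnerProductSpace

variable {E : Type*} [NormedAddCommGroup E] [InnerProductSpace ℝ E]

theorem inner_sub_smul_self (u w : E) (c : ℝ) : ⟪u - c • w, w⟫ = ⟪u, w⟫ - c * ‖w‖ ^ 2 := by
  rw [inner_sub_left, real_inner_smul_left, real_inner_self_eq_norm_sq]

theorem real_inner_le_mul_norm_sq_of_norm_le {u w : E} {M : ℝ} (h : ‖u‖ ≤ M * ‖w‖) :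
    ⟪u, w⟫ ≤ M * ‖w‖ ^ 2 :=
  calc ⟪u, w⟫ ≤ ‖u‖ * ‖w‖ := real_inner_le_norm u w
    _ ≤ M * ‖w‖ * ‖w‖ := by gcongr
    _ = M * ‖w‖ ^ 2 := by ring

theorem norm_sub_smul_sq (u w : E) (c : ℝ) :
    ‖u - c • w‖ ^ 2 = ‖u‖ ^ 2 - 2 * c * ⟪u, w⟫ + c ^ 2 * ‖w‖ ^ 2 := by
  rw [norm_sub_sq_real, real_inner_smul_right, norm_smul, Real.norm_eq_abs, mul_pow, sq_abs]
  ring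

variable [CompleteSpace E]

theorem HasGradientAt.neg {f : E → ℝ} {f' x : E} (h : HasGradientAt f f' x) :
    HasGradientAt (fun z => -f z) (-f') x := by
  rw [hasGradientAt_iff_hasFDerivAt, map_neg]
  exact h.hasFDerivAt.neg

theorem HasGradientAt.hasDerivAt_comp_add_smul {f : E → ℝ} {f' x v : E} {t : ℝ}
    (h : HasGradientAt f f' (x + t • v)) :
    HasDerivAt (fun s : ℝ => f (x + s • v)) ⟪f', v⟫ t := by
  have hline : HasDerivAt (fun s : ℝ => x + s • v) v t := by
    simpa using ((hasDerivAt_id t).smul_const v).const_add x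
  simpa [Function.comp_def] using h.hasFDerivAt.comp_hasDerivAt t hline

theorem hasGradientAt_sub_half_smul_norm_sq {f : E → ℝ} {f' x : E} (h : HasGradientAt f f' x)
    (c : ℝ) : HasGradientAt (fun z => f z - c / 2 * ‖z‖ ^ 2) (f' - c • x) x := by
  have hsq : HasFDerivAt (fun z : E => ‖z‖ ^ 2) (2 • innerSL ℝ x) x := by
    simpa using (hasFDerivAt_id x).norm_sq
  rw [hasGradientAt_iff_hasFDerivAt]
  refine (h.hasFDerivAt.sub (hsq.const_mul (c / 2))).congr_fderiv ?_
  ext w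
  simp only [sub_apply, smul_apply, InnerProductSpace.toDual_apply_apply, innerSL_apply_apply,
    smul_eq_mul, inner_sub_left, real_inner_smul_left]
  ring

variable {f : E → ℝ} {g : E → E}

theorem le_apply_of_forall_le_inner_gradient_sub (hf : ∀ x, HasGradientAt f (g x) x) {μ : ℝ}
    (hg : ∀ a b, μ * ‖a - b‖ ^ 2 ≤ ⟪g a - g b, a - b⟫) (x y : E) :
    f x + ⟪g x, y - x⟫ + μ / 2 * ‖y - x‖ ^ 2 ≤ f y := by
  set v := y - x
  set ψ : ℝ → ℝ := fun t => f (x + t • v) - t * ⟪g x, v⟫ - μ / 2 * t ^ 2 * ‖v‖ ^ 2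
  have hψ' : ∀ t, HasDerivAt ψ (⟪g (x + t • v) - g x, v⟫ - μ * t * ‖v‖ ^ 2) t := by
    intro t
    have hsq : HasDerivAt (fun t : ℝ => μ / 2 * t ^ 2 * ‖v‖ ^ 2) (μ * t * ‖v‖ ^ 2) t := by
      refine (((hasDerivAt_pow 2 t).const_mul (μ / 2)).mul_const (‖v‖ ^ 2)).congr_deriv ?_
      simp only [Nat.cast_ofNat, Nat.add_one_sub_one, pow_one]
      ring
    refine (((hf _).hasDerivAt_comp_add_smul.sub (hasDerivAt_mul_const ⟪g x, v⟫)).sub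
      hsq).congr_deriv ?_
    rw [inner_sub_left]
  have hmono : MonotoneOn ψ (Set.Icc 0 1) := by
    refine monotoneOn_of_hasDerivWithinAt_nonneg (convex_Icc 0 1)
      (fun t _ => (hψ' t).continuousAt.continuousWithinAt) (fun t _ => (hψ' t).hasDerivWithinAt) ?_
    intro t ht
    rw [interior_Icc] at ht
    have hstep := hg (x + t • v) x
    rw [add_sub_cancel_left, real_inner_smul_right, norm_smul, Real.norm_of_nonneg ht.1.le] at hstep
    nlinarith [ht.1]
  have h01 := hmono (Set.left_mem_Icc.2 zero_le_one) (Set.right_mem_Icc.2 zero_le_one) zero_le_one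
  simp only [ψ, zero_smul, one_smul, add_zero, zero_mul, sub_zero, one_pow, mul_one, v,
    add_sub_cancel] at h01
  linarith

theorem apply_le_of_forall_inner_gradient_sub_le (hf : ∀ x, HasGradientAt f (g x) x) {L : ℝ}
    (hg : ∀ a b, ⟪g a - g b, a - b⟫ ≤ L * ‖a - b‖ ^ 2) (x y : E) :
    f y ≤ f x + ⟪g x, y - x⟫ + L / 2 * ‖y - x‖ ^ 2 := by
  have hneg : ∀ a b, -L * ‖a - b‖ ^ 2 ≤ ⟪-g a - -g b, a - b⟫ := fun a b => by
    rw [← neg_sub', inner_neg_left]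
    linarith [hg a b]
  have := le_apply_of_forall_le_inner_gradient_sub (fun z => (hf z).neg) hneg x y
  rw [inner_neg_left] at this
  linarith

theorem mul_sub_mul_sq_le_of_hasGradientAt (hf : ∀ x, HasGradientAt f (g x) x) {L : ℝ}
    (hmono : ∀ a b, 0 ≤ ⟪g a - g b, a - b⟫)
    (hupper : ∀ a b, ⟪g a - g b, a - b⟫ ≤ L * ‖a - b‖ ^ 2) (x y : E) (t : ℝ) :
    (t - L / 2 * t ^ 2) * ‖g y - g x‖ ^ 2 ≤ f y - f x - ⟪g x, y - x⟫ := by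
  set d := g y - g x
  set z := y - t • d
  have hlower : f x + ⟪g x, z - x⟫ ≤ f z := by
    simpa using le_apply_of_forall_le_inner_gradient_sub hf (μ := 0) (by simpa using hmono) x z
  have hupper' := apply_le_of_forall_inner_gradient_sub_le hf hupper y z
  have hzx : z - x = (y - x) - t • d := by simp only [z]; abel
  have hzy : z - y = -(t • d) := by simp [z]
  rw [hzx, inner_sub_right, real_inner_smul_right] at hlower
  rw [hzy, inner_neg_right, real_inner_smul_right, norm_neg, norm_smul, Real.norm_eq_abs,
    mul_pow, sq_abs] at hupper'
  have hd : ⟪g y, d⟫ - ⟪g x, d⟫ = ‖d‖ ^ 2 := by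
    rw [← inner_sub_left, real_inner_self_eq_norm_sq]
  linear_combination hlower + hupper' - t * hd

theorem norm_sub_sq_le_mul_inner_of_hasGradientAt (hf : ∀ x, HasGradientAt f (g x) x) {L : ℝ}
    (hL : 0 ≤ L) (hmono : ∀ a b, 0 ≤ ⟪g a - g b, a - b⟫)
    (hupper : ∀ a b, ⟪g a - g b, a - b⟫ ≤ L * ‖a - b‖ ^ 2) (x y : E) :
    ‖g x - g y‖ ^ 2 ≤ L * ⟪g x - g y, x - y⟫ := by
  refine le_mul_of_forall_two_mul_sub_mul_sq_le hL fun t => ?_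
  have hxy := mul_sub_mul_sq_le_of_hasGradientAt hf hmono hupper x y t
  have hyx := mul_sub_mul_sq_le_of_hasGradientAt hf hmono hupper y x t
  rw [norm_sub_rev] at hxy
  have hsum : ⟪g x - g y, x - y⟫ = -⟪g x, y - x⟫ - ⟪g y, x - y⟫ := by
    simp only [inner_sub_left, inner_sub_right]
    ring
  rw [hsum]
  linear_combination hxy + hyx

end InnerProductSpace

theorem cocoercivity (n : ℕ) (f : EuclideanSpace ℝ (Fin n) → ℝ)
    (g : EuclideanSpace ℝ (Fin n) → EuclideanSpace ℝ (Fin n))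
    (hg : ∀ x, HasGradientAt f (g x) x)
    (m M : ℝ) (hm : 0 < m) (hmM : m ≤ M)
    (hstrong : ∀ x y, ⟪g x - g y, x - y⟫ ≥ m * ‖x - y‖ ^ 2)
    (hlip : ∀ x y, ‖g x - g y‖ ≤ M * ‖x - y‖) :
    ∀ x y, ⟪g x - g y, x - y⟫ ≥
      (m * M / (m + M)) * ‖x - y‖ ^ 2 + (1 / (m + M)) * ‖g x - g y‖ ^ 2 := by
  intro x y
  set G := fun z => g z - m • z
  have hG z : HasGradientAt (fun z => f z - m / 2 * ‖z‖ ^ 2) (G z) z :=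
    hasGradientAt_sub_half_smul_norm_sq (hg z) m
  have hGsub a b : G a - G b = (g a - g b) - m • (a - b) := by
    simp only [G, smul_sub]
    abel
  have hmono a b : 0 ≤ ⟪G a - G b, a - b⟫ := by
    rw [hGsub, inner_sub_smul_self]
    linarith [hstrong a b]
  have hupper a b : ⟪G a - G b, a - b⟫ ≤ (M - m) * ‖a - b‖ ^ 2 := by
    rw [hGsub, inner_sub_smul_self]
    linarith [real_inner_le_mul_norm_sq_of_norm_le (hlip a b)]
  have hcoco := norm_sub_sq_le_mul_inner_of_hasGradientAt hG (sub_nonneg.2 hmM) hmono hupper x y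
  rw [hGsub, norm_sub_smul_sq, inner_sub_smul_self] at hcoco
  rw [ge_iff_le, div_mul_eq_mul_div, one_div_mul_eq_div, ← add_div, div_le_iff₀ (by linarith)]
  linear_combination hcoco
end

section
/- Let Ω = diag(q₁,…,q_n) with 0 < q_min ≤ q_i ≤ 1, and let w, w^∞ ∈ ℝ^n be fixed vectors satisfying ‖Pw - w‖² + 2⟨w - w^∞, Pw - w⟩ ≤ -θ‖w - w^∞‖² for some θ ∈ (0,1) and matrix P. Let Ω^k be a random 0-1 diagonal matrix with E[Ω^k] = Ω. Then E[‖w + Ω^k(Pw - w) - w^∞‖²_{Ω^{-1}}] ≤ (1 - q_min·θ)·‖w - w^∞‖²_{Ω^{-1}}. -/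
/-!
Write `a = w - w^∞` and `d = Pw - w`. Since each `εᵢ` takes only the values 0 and 1, `εᵢ² = εᵢ`,
so `(aᵢ + εᵢ dᵢ)² = aᵢ² + εᵢ (2 aᵢ dᵢ + dᵢ²)` and taking expectations gives
`E[(aᵢ + εᵢ dᵢ)²] / qᵢ = aᵢ² / qᵢ + 2 aᵢ dᵢ + dᵢ²`: the weights `1/qᵢ` exactly cancel the
activation probabilities. Summing, the hypothesis bounds the correction by `-θ ‖a‖²`, and
`‖a‖² ≥ q_min ‖a‖²_{Ω⁻¹}`.
-/

open MeasureTheory Finset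

lemma sq_add_mul_of_eq_zero_or_eq_one {e : ℝ} (he : e = 0 ∨ e = 1) (a d : ℝ) :
    (a + e * d) ^ 2 = a ^ 2 + e * (2 * a * d + d ^ 2) := by
  rcases he with rfl | rfl <;> ring

section Bernoulli

variable {Ω : Type*} [MeasurableSpace Ω] {μ : Measure Ω} {e : Ω → ℝ}

lemma integrable_sq_add_mul_of_eq_zero_or_eq_one [IsFiniteMeasure μ]
    (he : ∀ ω, e ω = 0 ∨ e ω = 1) (hint : Integrable e μ) (a d : ℝ) :
    Integrable (fun ω => (a + e ω * d) ^ 2) μ := by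
  simp_rw [sq_add_mul_of_eq_zero_or_eq_one (he _)]
  exact (integrable_const _).add (hint.mul_const _)

lemma integral_sq_add_mul_of_eq_zero_or_eq_one [IsProbabilityMeasure μ]
    (he : ∀ ω, e ω = 0 ∨ e ω = 1) (hint : Integrable e μ) (a d : ℝ) :
    ∫ ω, (a + e ω * d) ^ 2 ∂μ = a ^ 2 + (∫ ω, e ω ∂μ) * (2 * a * d + d ^ 2) := by
  simp_rw [sq_add_mul_of_eq_zero_or_eq_one (he _)]
  rw [integral_add (integrable_const _) (hint.mul_const _), integral_const, integral_mul_const,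
    probReal_univ, one_smul]

lemma integral_sq_add_mul_div_of_integral_eq [IsProbabilityMeasure μ]
    (he : ∀ ω, e ω = 0 ∨ e ω = 1) (hint : Integrable e μ) {q : ℝ} (hq : 0 < q)
    (hmean : ∫ ω, e ω ∂μ = q) (a d : ℝ) :
    ∫ ω, (a + e ω * d) ^ 2 / q ∂μ = a ^ 2 / q + (2 * a * d + d ^ 2) := by
  rw [integral_div, integral_sq_add_mul_of_eq_zero_or_eq_one he hint, hmean, add_div,
    mul_div_cancel_left₀ _ hq.ne']

end Bernoulli

lemma mul_sum_sq_div_le_sum_sq {ι : Type*} [Fintype ι] {q : ι → ℝ} {c : ℝ}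
    (hq : ∀ i, 0 < q i) (hc : ∀ i, c ≤ q i) (a : ι → ℝ) :
    c * ∑ i, a i ^ 2 / q i ≤ ∑ i, a i ^ 2 := by
  rw [mul_sum]
  refine sum_le_sum fun i _ => ?_
  rw [← mul_div_assoc, div_le_iff₀ (hq i), mul_comm c]
  exact mul_le_mul_of_nonneg_left (hc i) (sq_nonneg _)

theorem randomized_weight_contraction
    {Ω : Type*} [MeasurableSpace Ω] (μ : Measure Ω) [IsProbabilityMeasure μ]
    (n : ℕ) (q : Fin n → ℝ) (qmin theta : ℝ) (P : Matrix (Fin n) (Fin n) ℝ)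
    (w winf : Fin n → ℝ)
    (hqmin : 0 < qmin) (hq : ∀ i, qmin ≤ q i ∧ q i ≤ 1)
    (htheta : 0 < theta ∧ theta < 1)
    (hineq : (∑ i, (P.mulVec w i - w i) ^ 2)
        + 2 * ∑ i, (w i - winf i) * (P.mulVec w i - w i)
        ≤ -theta * ∑ i, (w i - winf i) ^ 2)
    (eps : Fin n → Ω → ℝ)
    (h01 : ∀ i ω, eps i ω = 0 ∨ eps i ω = 1)
    (hint : ∀ i, Integrable (eps i) μ)
    (hmean : ∀ i, ∫ ω, eps i ω ∂μ = q i) :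
    ∫ ω, ∑ i, (w i + eps i ω * (P.mulVec w i - w i) - winf i) ^ 2 / q i ∂μ
      ≤ (1 - qmin * theta) * ∑ i, (w i - winf i) ^ 2 / q i := by
  set a : Fin n → ℝ := fun i => w i - winf i
  set d : Fin n → ℝ := fun i => P.mulVec w i - w i
  have hq0 : ∀ i, 0 < q i := fun i => hqmin.trans_le (hq i).1
  have hexpect : ∫ ω, ∑ i, (w i + eps i ω * d i - winf i) ^ 2 / q i ∂μ
      = ∑ i, (a i ^ 2 / q i + (2 * a i * d i + d i ^ 2)) := by
    simp_rw [show ∀ i ω, w i + eps i ω * d i - winf i = a i + eps i ω * d i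
      from fun i ω => by simp only [a]; ring]
    rw [integral_finsetSum _ fun i _ =>
      (integrable_sq_add_mul_of_eq_zero_or_eq_one (h01 i) (hint i) _ _).div_const _]
    exact sum_congr rfl fun i _ =>
      integral_sq_add_mul_div_of_integral_eq (h01 i) (hint i) (hq0 i) (hmean i) _ _
  have hcorr : ∑ i, (2 * a i * d i + d i ^ 2) ≤ -theta * ∑ i, a i ^ 2 := by
    calc ∑ i, (2 * a i * d i + d i ^ 2) = ∑ i, d i ^ 2 + 2 * ∑ i, a i * d i := by
          rw [sum_add_distrib, mul_sum, add_comm]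
          simp only [mul_assoc]
      _ ≤ -theta * ∑ i, a i ^ 2 := hineq
  have hweight := mul_sum_sq_div_le_sum_sq hq0 (fun i => (hq i).1) a
  rw [hexpect, sum_add_distrib]
  nlinarith [htheta.1]
end
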